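/- If X^t_m = ω_max (global maximum) then U^t_{m−1} + U^{t−1}_{m−1} = κ_max. -/
import Mathlib

open Function Set

private lemma fm_finset {h : ℤ → ℝ} {F : Finset ℤ} (hsub : support h ⊆ ↑F)
    (s : Set ℤ) [DecidablePred (· ∈ s)] :
    ∑ᶠ j ∈ s, h j = ∑ j ∈ F.filter (· ∈ s), h j := by
  apply finsum_mem_eq_sum_of_inter_support_eq
  ext x
  simp only [Set.mem_inter_iff, Finset.coe_filter, Set.mem_setOf_eq, Function.mem_support]
  constructor
  · rintro ⟨h1, h2⟩; exact ⟨⟨hsub h2, h1⟩, h2⟩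
  · rintro ⟨⟨_, h1⟩, h2⟩; exact ⟨h1, h2⟩

private lemma supp_sub_fin {f g : ℤ → ℝ} (hf : (support f).Finite)
    (hg : (support g).Finite) : (support fun j => f j - g j).Finite := by
  refine (hf.union hg).subset ?_
  intro x hx
  by_contra hc
  simp only [Set.mem_union, Function.mem_support, not_or, not_not] at hc
  simp only [Function.mem_support, hc.1, hc.2, sub_zero, ne_eq, not_true_eq_false] at hx

private lemma fm_sub {f g : ℤ → ℝ} (hf : (support f).Finite) (hg : (support g).Finite)
    (s : Set ℤ) :
    ∑ᶠ j ∈ s, (f j - g j) = (∑ᶠ j ∈ s, f j) - ∑ᶠ j ∈ s, g j := by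
  classical
  have h1 : support f ⊆ ↑(hf.toFinset ∪ hg.toFinset) := by
    intro x hx; simp only [Finset.coe_union, Set.mem_union, Finset.mem_coe,
      Set.Finite.mem_toFinset]; exact Or.inl hx
  have h2 : support g ⊆ ↑(hf.toFinset ∪ hg.toFinset) := by
    intro x hx; simp only [Finset.coe_union, Set.mem_union, Finset.mem_coe,
      Set.Finite.mem_toFinset]; exact Or.inr hx
  have h3 : support (fun j => f j - g j) ⊆ ↑(hf.toFinset ∪ hg.toFinset) := by
    intro x hx
    by_contra hc
    simp only [Finset.coe_union, Set.mem_union, Finset.mem_coe,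
      Set.Finite.mem_toFinset, Function.mem_support, not_or, not_not] at hc
    simp only [Function.mem_support, hc.1, hc.2, sub_zero, ne_eq, not_true_eq_false] at hx
  rw [fm_finset h1 s, fm_finset h2 s, fm_finset h3 s, Finset.sum_sub_distrib]

private lemma fm_ici {f : ℤ → ℝ} (hf : (support f).Finite) (k : ℤ) :
    ∑ᶠ j ∈ Set.Ici k, f j = f k + ∑ᶠ j ∈ Set.Ioi k, f j := by
  have h : Set.Ici k = insert k (Set.Ioi k) := by
    ext x; simp only [Set.mem_Ici, Set.mem_insert_iff, Set.mem_Ioi]; omega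
  rw [h]
  exact finsum_mem_insert' f (by simp) (hf.subset Set.inter_subset_right)

private lemma fm_split {f : ℤ → ℝ} (hf : (support f).Finite) (k : ℤ) :
    (∑ᶠ j ∈ Set.Iio k, f j) + ∑ᶠ j ∈ Set.Ici k, f j = ∑ᶠ j, f j := by
  have h := finsum_mem_union' (f := f) (Set.Iio_disjoint_Ici (le_refl k))
    (hf.subset Set.inter_subset_right) (hf.subset Set.inter_subset_right)
  rw [Set.Iio_union_Ici, finsum_mem_univ] at h
  exact h.symm

private lemma fm_bound {f : ℤ → ℝ} (hf : (support f).Finite) (s : Set ℤ) :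
    ∑ᶠ j ∈ s, f j ≤ ∑ j ∈ hf.toFinset, |f j| := by
  classical
  have h1 : support f ⊆ ↑hf.toFinset := by intro x hx; simpa using hx
  rw [fm_finset h1 s]
  calc ∑ j ∈ hf.toFinset.filter (· ∈ s), f j
      ≤ ∑ j ∈ hf.toFinset.filter (· ∈ s), |f j| :=
        Finset.sum_le_sum fun j _ => le_abs_self _
    _ ≤ ∑ j ∈ hf.toFinset, |f j| :=
        Finset.sum_le_sum_of_subset_of_nonneg (Finset.filter_subset _ _)
          (fun j _ _ => abs_nonneg _)

/-- For a finitely supported udKdV solution, with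
`ω_max = max_i X^t_i` (independent of `t`) and `κ_max = min 1 ω_max`:
if `X^t_m = ω_max` (a global maximum) then `U^t_{m−1} + U^{t−1}_{m−1} = κ_max`. -/
theorem stmt_13 (U : ℤ → ℤ → ℝ)
    (hfin : ∀ t, (Function.support (U t)).Finite)
    (hup : ∀ t i, U (t + 1) i =
      min (1 - U t i) (∑ᶠ j ∈ Set.Iio i, (U t j - U (t + 1) j)))
    (hdown : ∀ t i, U (t - 1) i =
      min (1 - U t i) (∑ᶠ j ∈ Set.Ioi i, (U t j - U (t - 1) j)))
    (X : ℤ → ℤ → ℝ)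
    (hX : ∀ t i, X t i = ∑ᶠ j ∈ Set.Ici i, (U (t + 1) j - U (t - 1) j))
    (ωmax : ℝ) (hω : ∀ t, (⨆ i : ℤ, X t i) = ωmax)
    (t m : ℤ) (hm : X t m = ωmax) :
    U t (m - 1) + U (t - 1) (m - 1) = min 1 ωmax := by
  classical
  set k := m - 1 with hk
  have hIoi : Set.Ici m = Set.Ioi k := by
    ext x; simp only [Set.mem_Ici, Set.mem_Ioi]; omega
  -- Step 1: conservation  ∑ᶠ U t = ∑ᶠ U (t+1)
  have hA : (∑ᶠ j, U t j) = ∑ᶠ j, U (t + 1) j := by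
    obtain ⟨b, hb⟩ := ((hfin t).union (hfin (t + 1))).bddAbove
    have hz : ∀ j, b + 1 ≤ j → U t j = 0 ∧ U (t + 1) j = 0 := by
      intro j hj
      constructor
      · by_contra hc
        have hle : j ≤ b := hb (Set.mem_union_left _ hc)
        omega
      · by_contra hc
        have hle : j ≤ b := hb (Set.mem_union_right _ hc)
        omega
    have h0 := hup t (b + 1)
    have e2 : (∑ᶠ j ∈ Set.Ici (b + 1), (U t j - U (t + 1) j)) = 0 := by
      apply finsum_mem_eq_zero_of_forall_eq_zero
      intro j hj
      obtain ⟨z1, z2⟩ := hz j (Set.mem_Ici.mp hj)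
      rw [z1, z2]; ring
    have e1 := fm_split (supp_sub_fin (hfin t) (hfin (t + 1))) (b + 1)
    have e3 : (∑ᶠ j ∈ Set.Iio (b + 1), (U t j - U (t + 1) j))
        = (∑ᶠ j, U t j) - ∑ᶠ j, U (t + 1) j := by
      rw [← finsum_sub_distrib (hfin t) (hfin (t + 1))]
      linarith
    rw [e3, (hz (b + 1) le_rfl).1, (hz (b + 1) le_rfl).2, sub_zero] at h0
    rcases min_cases (1 : ℝ) ((∑ᶠ j, U t j) - ∑ᶠ j, U (t + 1) j) with ⟨h, _⟩ | ⟨h, _⟩ <;>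
      · rw [h] at h0; linarith
  -- Step 2: rewrite the tropical equations at position k
  have hd := hdown t k
  rw [fm_sub (hfin t) (hfin (t - 1))] at hd
  have hu := hup t k
  rw [fm_sub (hfin t) (hfin (t + 1))] at hu
  have hu2 : (∑ᶠ j ∈ Set.Iio k, U t j) - ∑ᶠ j ∈ Set.Iio k, U (t + 1) j
      = (∑ᶠ j ∈ Set.Ici k, U (t + 1) j) - ∑ᶠ j ∈ Set.Ici k, U t j := by
    have s1 := fm_split (hfin t) k
    have s2 := fm_split (hfin (t + 1)) k
    linarith
  rw [hu2, fm_ici (hfin (t + 1)) k, fm_ici (hfin t) k] at hu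
  -- Step 3: X values
  have hXm := hX t m
  rw [fm_sub (hfin (t + 1)) (hfin (t - 1)), hIoi] at hXm
  have hXk := hX t k
  rw [fm_sub (hfin (t + 1)) (hfin (t - 1)), fm_ici (hfin (t + 1)) k,
    fm_ici (hfin (t - 1)) k] at hXk
  -- Step 4: boundedness and monotonicity at the max
  have hdfin : (support fun j => U (t + 1) j - U (t - 1) j).Finite :=
    supp_sub_fin (hfin (t + 1)) (hfin (t - 1))
  have hbdd : BddAbove (Set.range (X t)) := by
    refine ⟨∑ j ∈ hdfin.toFinset, |U (t + 1) j - U (t - 1) j|, ?_⟩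
    rintro x ⟨i, rfl⟩
    rw [hX t i]
    exact fm_bound hdfin _
  have hkle : X t k ≤ ωmax := by
    have := le_ciSup hbdd k
    rwa [hω t] at this
  have hmono : U (t + 1) k ≤ U (t - 1) k := by
    rw [hXm] at hm
    linarith [hXk, hkle]
  -- Step 5: extract inequalities and conclude
  have hd1 : U (t - 1) k ≤ 1 - U t k := hd.le.trans (min_le_left _ _)
  have hd2 : U (t - 1) k ≤ (∑ᶠ j ∈ Set.Ioi k, U t j) - ∑ᶠ j ∈ Set.Ioi k, U (t - 1) j :=
    hd.le.trans (min_le_right _ _)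
  have hd3 := min_choice (1 - U t k)
    ((∑ᶠ j ∈ Set.Ioi k, U t j) - ∑ᶠ j ∈ Set.Ioi k, U (t - 1) j)
  rw [← hd] at hd3
  have hu1 : U (t + 1) k ≤ (U (t + 1) k + ∑ᶠ j ∈ Set.Ioi k, U (t + 1) j)
      - (U t k + ∑ᶠ j ∈ Set.Ioi k, U t j) := hu.le.trans (min_le_right _ _)
  have hu3 := min_choice (1 - U t k)
    ((U (t + 1) k + ∑ᶠ j ∈ Set.Ioi k, U (t + 1) j)
      - (U t k + ∑ᶠ j ∈ Set.Ioi k, U t j))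
  rw [← hu] at hu3
  rw [hXm] at hm
  rcases hd3 with h1 | h1
  · rw [min_eq_left (by linarith)]
    linarith
  · rcases hu3 with h2 | h2
    · rw [min_eq_left (by linarith)]
      linarith
    · rw [min_eq_right (by linarith)]
      linarith
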